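/- The series whose terms are 1/( (a² + b²)·(c² + d²)·((a+c)² + (b+d)²) ), summed over all quadruples (a,b,c,d) of nonnegative integers with a·d − b·c = 1, converges and its sum equals π/4. Equivalently, 4·∑_{(x,y)} 1/( ‖x‖²·‖y‖²·‖x+y‖² ) = π, where the sum is over pairs of vectors x, y ∈ ℤ² with nonnegative coordinates spanning lattice parallelograms of oriented area one. -/

import Mathlib

/-- Quadruples `(a,b,c,d)` of nonnegative integers with `a·d − b·c = 1`. -/
def T : Set (ℤ × ℤ × ℤ × ℤ) :=
  {p | 0 ≤ p.1 ∧ 0 ≤ p.2.1 ∧ 0 ≤ p.2.2.1 ∧ 0 ≤ p.2.2.2 ∧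
    p.1 * p.2.2.2 - p.2.1 * p.2.2.1 = 1}

/-!
Every pair `(x, y)` in `T` arises from `(e₁, e₂)` by a unique sequence of moves
`(x, y) ↦ (x, x + y)` and `(x, y) ↦ (x + y, y)` (the Stern–Brocot tree), so `T` is the disjoint
union of finite levels. Let `θ` be the angle from `x` to `y`. Since `x̄ y = x·y + i`, we have
`cot θ = x·y`, the angle `θ` splits additively between the two children of a node, and so it sums
to `π/2` over every level. With `φ = sin θ cos θ = x·y / (|x|²|y|²)`,
`2 / (|x|²|y|²|x+y|²) = φ(x, x+y) + φ(x+y, y) - φ(x, y)`, so twice the sum over the first `N`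
levels telescopes to the sum of `φ` over level `N`. There `x·y ≥ N`, and
`θ cos² θ ≤ φ ≤ θ` squeezes that sum between `(1 - 1/(N+1)) π/2` and `π/2`.
-/

open Filter Topology Finset Real ComplexConjugate
open Complex (arg normSq)

theorem hasSum_of_monotone_of_tendsto_sum {ι : Type*} {g : ι → ℝ} {s : ℕ → Finset ι} {a : ℝ}
    (hg : 0 ≤ g) (hs : Monotone s) (hcover : ∀ i, ∃ n, i ∈ s n)
    (h : Tendsto (fun n ↦ ∑ i ∈ s n, g i) atTop (𝓝 a)) : HasSum g a := by
  have hmono : Monotone fun n ↦ ∑ i ∈ s n, g i := fun m n hmn ↦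
    sum_le_sum_of_subset_of_nonneg (hs hmn) fun i _ _ ↦ hg i
  have hs' := tendsto_atTop_finset_of_monotone hs hcover
  have hsum : Summable g := summable_of_sum_le hg fun t ↦ by
    obtain ⟨n, hn⟩ := (tendsto_atTop.1 hs' t).exists
    exact (sum_le_sum_of_subset_of_nonneg hn fun i _ _ ↦ hg i).trans (hmono.ge_of_tendsto h n)
  exact tendsto_nhds_unique (hsum.hasSum.comp hs') h ▸ hsum.hasSum

theorem Real.sin_mul_cos_le {θ : ℝ} (hθ : 0 ≤ θ) : sin θ * cos θ ≤ θ := by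
  have := sin_le (by linarith : 0 ≤ 2 * θ)
  rw [sin_two_mul] at this
  linarith

theorem Real.mul_cos_sq_le_sin_mul_cos {θ : ℝ} (h₀ : 0 ≤ θ) (h₁ : θ ≤ π / 2) :
    θ * cos θ ^ 2 ≤ sin θ * cos θ := by
  rcases h₁.lt_or_eq with h₁ | rfl
  · have hcos : 0 < cos θ := cos_pos_of_mem_Ioo ⟨by linarith [pi_pos], h₁⟩
    calc θ * cos θ ^ 2 ≤ tan θ * cos θ ^ 2 := by gcongr; exact le_tan h₀ h₁
      _ = sin θ * cos θ := by rw [tan_eq_sin_div_cos]; field_simp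
  · simp

theorem Complex.sin_arg_mul_cos_arg (z : ℂ) :
    Real.sin (arg z) * Real.cos (arg z) = z.im * z.re / normSq z := by
  rcases eq_or_ne z 0 with rfl | hz
  · simp
  · rw [sin_arg, cos_arg hz, div_mul_div_comm, ← sq, ← normSq_eq_norm_sq]

namespace T

def root : T := ⟨(1, 0, 0, 1), by norm_num [T]⟩

def childL (p : T) : T :=
  ⟨(p.1.1, p.1.2.1, p.1.1 + p.1.2.2.1, p.1.2.1 + p.1.2.2.2), by
    obtain ⟨ha, hb, hc, hd, hdet⟩ := p.2
    exact ⟨ha, hb, by linarith, by linarith, by linear_combination hdet⟩⟩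

def childR (p : T) : T :=
  ⟨(p.1.1 + p.1.2.2.1, p.1.2.1 + p.1.2.2.2, p.1.2.2.1, p.1.2.2.2), by
    obtain ⟨ha, hb, hc, hd, hdet⟩ := p.2
    exact ⟨by linarith, by linarith, hc, hd, by linear_combination hdet⟩⟩

theorem one_le_fst (p : T) : 1 ≤ p.1.1 := by
  obtain ⟨ha, hb, hc, hd, hdet⟩ := p.2
  nlinarith

theorem one_le_snd_snd_snd (p : T) : 1 ≤ p.1.2.2.2 := by
  obtain ⟨ha, hb, hc, hd, hdet⟩ := p.2
  nlinarith

theorem childL_injective : Function.Injective childL := by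
  rintro ⟨⟨a, b, c, d⟩, _⟩ ⟨⟨a', b', c', d'⟩, _⟩ h
  simp only [childL, Subtype.mk.injEq, Prod.mk.injEq] at h
  ext <;> simp <;> omega

theorem childR_injective : Function.Injective childR := by
  rintro ⟨⟨a, b, c, d⟩, _⟩ ⟨⟨a', b', c', d'⟩, _⟩ h
  simp only [childR, Subtype.mk.injEq, Prod.mk.injEq] at h
  ext <;> simp <;> omega

theorem childL_ne_childR (p q : T) : childL p ≠ childR q := by
  intro h
  have := one_le_snd_snd_snd p
  have := q.2.2.1
  simp only [childL, childR, Subtype.mk.injEq, Prod.mk.injEq] at h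
  omega

theorem childL_ne_root (p : T) : childL p ≠ root := by
  intro h
  have := p.2.2.2.1
  rw [Subtype.ext_iff] at h
  simp only [childL, root, Prod.mk.injEq] at h
  omega

theorem childR_ne_root (p : T) : childR p ≠ root := by
  intro h
  have := p.2.2.1
  rw [Subtype.ext_iff] at h
  simp only [childR, root, Prod.mk.injEq] at h
  omega

theorem exists_parent (p : T) (hp : p ≠ root) :
    ∃ q, (childL q = p ∨ childR q = p) ∧ q.1.2.1 + q.1.2.2.1 < p.1.2.1 + p.1.2.2.1 := by
  obtain ⟨⟨a, b, c, d⟩, ha, hb, hc, hd, hdet⟩ := p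
  dsimp only at ha hb hc hd hdet ⊢
  have ha1 : 1 ≤ a := by nlinarith
  have hd1 : 1 ≤ d := by nlinarith
  rcases le_or_gt a c with hac | hca
  · have hbd : b ≤ d := by nlinarith
    refine ⟨⟨(a, b, c - a, d - b), ha, hb, by linarith, by linarith, by linear_combination hdet⟩,
      Or.inl ?_, by dsimp only; linarith⟩
    ext <;> simp [childL]
  rcases le_or_gt d b with hdb | hbd
  · refine ⟨⟨(a - c, b - d, c, d), by linarith, by linarith, hc, hd, by linear_combination hdet⟩,
      Or.inr ?_, by dsimp only; linarith⟩
    ext <;> simp [childR]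
  · have hb0 : b = 0 := by nlinarith
    have hc0 : c = 0 := by nlinarith
    subst hb0 hc0
    obtain ⟨rfl, rfl⟩ : a = 1 ∧ d = 1 := by constructor <;> nlinarith
    exact absurd rfl hp

def level : ℕ → Finset T
  | 0 => {root}
  | n + 1 => (level n).image childL ∪ (level n).image childR

theorem disjoint_image_childL_image_childR (s t : Finset T) :
    Disjoint (s.image childL) (t.image childR) := by
  simp only [disjoint_left, mem_image]
  rintro _ ⟨p, -, rfl⟩ ⟨q, -, hq⟩
  exact childL_ne_childR p q hq.symm

theorem sum_level_succ (g : T → ℝ) (n : ℕ) :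
    ∑ p ∈ level (n + 1), g p = ∑ p ∈ level n, (g (childL p) + g (childR p)) := by
  rw [level, sum_union (disjoint_image_childL_image_childR _ _),
    sum_image childL_injective.injOn, sum_image childR_injective.injOn, sum_add_distrib]

theorem disjoint_level_zero_succ (n : ℕ) : Disjoint (level 0) (level (n + 1)) := by
  simp only [level, disjoint_singleton_left, mem_union, mem_image, not_or, not_exists, not_and]
  exact ⟨fun p _ ↦ childL_ne_root p, fun p _ ↦ childR_ne_root p⟩

theorem disjoint_level {m n : ℕ} (h : m ≠ n) : Disjoint (level m) (level n) := by
  induction m generalizing n with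
  | zero =>
    obtain ⟨n, rfl⟩ := Nat.exists_eq_succ_of_ne_zero h.symm
    exact disjoint_level_zero_succ n
  | succ m ih =>
    cases n with
    | zero => exact (disjoint_level_zero_succ m).symm
    | succ n =>
      have hmn := ih (n := n) (by omega)
      simp only [level, disjoint_union_left, disjoint_union_right]
      exact ⟨⟨(disjoint_image childL_injective).2 hmn,
          (disjoint_image_childL_image_childR _ _).symm⟩,
        ⟨disjoint_image_childL_image_childR _ _, (disjoint_image childR_injective).2 hmn⟩⟩

theorem exists_mem_level (p : T) : ∃ n, p ∈ level n := by
  induction h : (p.1.2.1 + p.1.2.2.1).toNat using Nat.strong_induction_on generalizing p with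
  | _ k ih =>
    by_cases hp : p = root
    · exact ⟨0, by simp [level, hp]⟩
    obtain ⟨q, hqp, hlt⟩ := exists_parent p hp
    have := q.2.2.1
    have := q.2.2.2.1
    obtain ⟨n, hn⟩ := ih _ (by omega) q rfl
    refine ⟨n + 1, ?_⟩
    rcases hqp with rfl | rfl <;> simp [level, mem_image_of_mem _ hn]

def x (p : T) : ℂ := ⟨p.1.1, p.1.2.1⟩

def y (p : T) : ℂ := ⟨p.1.2.2.1, p.1.2.2.2⟩

/-- `x̄ y = x·y + i det(x, y)`. -/
def pairing (p : T) : ℂ := conj (x p) * y p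

noncomputable def angle (p : T) : ℝ := arg (pairing p)

noncomputable def sinCos (p : T) : ℝ := sin (angle p) * cos (angle p)

noncomputable def term (p : T) : ℝ := 1 / (normSq (x p) * normSq (y p) * normSq (x p + y p))

theorem pairing_im (p : T) : (pairing p).im = 1 := by
  have hdet : (p.1.1 : ℝ) * p.1.2.2.2 - p.1.2.1 * p.1.2.2.1 = 1 := by exact_mod_cast p.2.2.2.2.2
  simp only [pairing, x, y, Complex.mul_im, Complex.conj_re, Complex.conj_im]
  linear_combination hdet

theorem pairing_re_nonneg (p : T) : 0 ≤ (pairing p).re := by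
  obtain ⟨ha, hb, hc, hd, -⟩ := p.2
  simp only [pairing, x, y, Complex.mul_re, Complex.conj_re, Complex.conj_im]
  have : (0 : ℝ) ≤ p.1.1 * p.1.2.2.1 + p.1.2.1 * p.1.2.2.2 := by exact_mod_cast by positivity
  linarith

theorem pairing_ne_zero (p : T) : pairing p ≠ 0 := fun h ↦ by
  simpa [h] using pairing_im p

theorem one_le_normSq_x (p : T) : 1 ≤ normSq (x p) := by
  have : (1 : ℝ) ≤ p.1.1 := by exact_mod_cast one_le_fst p
  rw [x, Complex.normSq_mk]
  nlinarith

theorem one_le_normSq_y (p : T) : 1 ≤ normSq (y p) := by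
  have : (1 : ℝ) ≤ p.1.2.2.2 := by exact_mod_cast one_le_snd_snd_snd p
  rw [y, Complex.normSq_mk]
  nlinarith

theorem normSq_pairing (p : T) : normSq (pairing p) = 1 + (pairing p).re ^ 2 := by
  rw [Complex.normSq_apply, pairing_im]
  ring

theorem normSq_x_mul_normSq_y (p : T) : normSq (x p) * normSq (y p) = 1 + (pairing p).re ^ 2 := by
  rw [← normSq_pairing, pairing, Complex.normSq_mul, Complex.normSq_conj]

theorem normSq_x_add_y (p : T) :
    normSq (x p + y p) = normSq (x p) + normSq (y p) + 2 * (pairing p).re := by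
  rw [Complex.normSq_add, pairing, ← Complex.conj_re, map_mul, Complex.conj_conj, mul_comm]

theorem x_childL (p : T) : x (childL p) = x p := rfl

theorem y_childL (p : T) : y (childL p) = x p + y p := by
  apply Complex.ext <;> simp [x, y, childL]

theorem x_childR (p : T) : x (childR p) = x p + y p := by
  apply Complex.ext <;> simp [x, y, childR]

theorem y_childR (p : T) : y (childR p) = y p := rfl

theorem pairing_childL (p : T) : pairing (childL p) = normSq (x p) + pairing p := by
  rw [pairing, pairing, x_childL, y_childL, mul_add, ← Complex.normSq_eq_conj_mul_self]

theorem pairing_childR (p : T) : pairing (childR p) = pairing p + normSq (y p) := by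
  rw [pairing, pairing, x_childR, y_childR, map_add, add_mul, ← Complex.normSq_eq_conj_mul_self]

theorem pairing_root : pairing root = Complex.I := by
  apply Complex.ext <;> simp [pairing, x, y, root]

theorem angle_nonneg (p : T) : 0 ≤ angle p :=
  Complex.arg_nonneg_iff.2 (by rw [pairing_im]; exact zero_le_one)

theorem angle_le_pi_div_two (p : T) : angle p ≤ π / 2 :=
  Complex.arg_le_pi_div_two_iff.2 (Or.inl (pairing_re_nonneg p))

theorem angle_root : angle root = π / 2 := by
  rw [angle, pairing_root, Complex.arg_I]

theorem angle_childL_add_angle_childR (p : T) :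
    angle (childL p) + angle (childR p) = angle p := by
  have hprod : pairing (childL p) * pairing (childR p) = normSq (x p + y p) * pairing p := by
    rw [pairing, pairing, pairing, x_childL, y_childL, x_childR, y_childR,
      Complex.normSq_eq_conj_mul_self]
    ring
  have hpos : 0 < normSq (x p + y p) := by
    rw [← x_childR]
    linarith [one_le_normSq_x (childR p)]
  have hsum : angle (childL p) + angle (childR p) ∈ Set.Ioc (-π) π := by
    constructor <;> linarith [angle_nonneg (childL p), angle_nonneg (childR p),
      angle_le_pi_div_two (childL p), angle_le_pi_div_two (childR p), pi_pos]
  rw [angle, angle, angle, ← Complex.arg_mul (pairing_ne_zero _) (pairing_ne_zero _) hsum, hprod,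
    Complex.arg_real_mul _ hpos]

theorem sum_level_angle (n : ℕ) : ∑ p ∈ level n, angle p = π / 2 := by
  induction n with
  | zero => simp [level, angle_root]
  | succ n ih => simp only [sum_level_succ, angle_childL_add_angle_childR, ih]

theorem sinCos_eq (p : T) : sinCos p = (pairing p).re / (1 + (pairing p).re ^ 2) := by
  rw [sinCos, angle, Complex.sin_arg_mul_cos_arg, pairing_im, one_mul, normSq_pairing]

theorem sinCos_root : sinCos root = 0 := by
  simp [sinCos, angle_root]

theorem sin_angle_sq (p : T) : sin (angle p) ^ 2 = 1 / (1 + (pairing p).re ^ 2) := by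
  rw [angle, Complex.sin_arg, pairing_im, div_pow, one_pow, ← Complex.normSq_eq_norm_sq,
    normSq_pairing]

theorem two_mul_term (p : T) :
    2 * term p = sinCos (childL p) + sinCos (childR p) - sinCos p := by
  have hX := one_le_normSq_x p
  have hY := one_le_normSq_y p
  have hs := pairing_re_nonneg p
  have hXY := normSq_x_mul_normSq_y p
  rw [term, sinCos_eq, sinCos_eq, sinCos_eq, pairing_childL, pairing_childR, normSq_x_add_y]
  simp only [Complex.add_re, Complex.ofReal_re]
  set X := normSq (x p)
  set Y := normSq (y p)
  set s := (pairing p).re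
  have hL : 1 + (X + s) ^ 2 = X * (X + Y + 2 * s) := by linear_combination -hXY
  have hR : 1 + (s + Y) ^ 2 = Y * (X + Y + 2 * s) := by linear_combination -hXY
  rw [hL, hR, ← hXY]
  field_simp
  linear_combination -2 * hXY

theorem two_mul_sum_range_sum_level_term (N : ℕ) :
    2 * ∑ k ∈ range N, ∑ p ∈ level k, term p = ∑ p ∈ level N, sinCos p := by
  have hstep (k : ℕ) : 2 * ∑ p ∈ level k, term p =
      ∑ p ∈ level (k + 1), sinCos p - ∑ p ∈ level k, sinCos p := by
    simp only [mul_sum, two_mul_term, sum_level_succ, ← sum_sub_distrib]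
  rw [mul_sum, sum_congr rfl fun k _ ↦ hstep k, sum_range_sub (fun k ↦ ∑ p ∈ level k, sinCos p)]
  simp [level, sinCos_root]

theorem le_pairing_re_of_mem_level {n : ℕ} {p : T} (hp : p ∈ level n) :
    (n : ℝ) ≤ (pairing p).re := by
  induction n generalizing p with
  | zero => exact_mod_cast pairing_re_nonneg p
  | succ n ih =>
    simp only [level, mem_union, mem_image] at hp
    rcases hp with ⟨q, hq, rfl⟩ | ⟨q, hq, rfl⟩
    · rw [pairing_childL, Complex.add_re, Complex.ofReal_re]
      push_cast
      linarith [ih hq, one_le_normSq_x q]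
    · rw [pairing_childR, Complex.add_re, Complex.ofReal_re]
      push_cast
      linarith [ih hq, one_le_normSq_y q]

theorem sinCos_le_angle (p : T) : sinCos p ≤ angle p :=
  sin_mul_cos_le (angle_nonneg p)

theorem mul_angle_le_sinCos_of_mem_level {n : ℕ} {p : T} (hp : p ∈ level n) :
    (1 - 1 / (n + 1)) * angle p ≤ sinCos p := by
  have hs := le_pairing_re_of_mem_level hp
  have hn : (n : ℝ) ≤ n ^ 2 := by exact_mod_cast Nat.le_self_pow two_ne_zero n
  have hcos : cos (angle p) ^ 2 = 1 - 1 / (1 + (pairing p).re ^ 2) := by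
    rw [← sin_angle_sq, ← sin_sq_add_cos_sq (angle p)]
    ring
  have hle : 1 / (1 + (pairing p).re ^ 2) ≤ 1 / (n + 1) :=
    one_div_le_one_div_of_le (by positivity) (by nlinarith)
  calc (1 - 1 / (n + 1)) * angle p ≤ angle p * cos (angle p) ^ 2 := by
        rw [hcos, mul_comm]
        gcongr
        exact angle_nonneg p
    _ ≤ sinCos p := mul_cos_sq_le_sin_mul_cos (angle_nonneg p) (angle_le_pi_div_two p)

theorem sum_level_sinCos_le (n : ℕ) : ∑ p ∈ level n, sinCos p ≤ π / 2 :=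
  (sum_le_sum fun p _ ↦ sinCos_le_angle p).trans_eq (sum_level_angle n)

theorem le_sum_level_sinCos (n : ℕ) :
    (1 - 1 / (n + 1)) * (π / 2) ≤ ∑ p ∈ level n, sinCos p := by
  rw [← sum_level_angle n, mul_sum]
  exact sum_le_sum fun p hp ↦ mul_angle_le_sinCos_of_mem_level hp

theorem term_nonneg (p : T) : 0 ≤ term p :=
  one_div_nonneg.2 <| mul_nonneg (mul_nonneg (Complex.normSq_nonneg _) (Complex.normSq_nonneg _))
    (Complex.normSq_nonneg _)

theorem tendsto_sum_biUnion_level_term :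
    Tendsto (fun N ↦ ∑ p ∈ (range N).biUnion level, term p) atTop (𝓝 (π / 4)) := by
  have hsum (N : ℕ) :
      ∑ p ∈ (range N).biUnion level, term p = (∑ p ∈ level N, sinCos p) / 2 := by
    rw [sum_biUnion fun m _ n _ h ↦ disjoint_level h, ← two_mul_sum_range_sum_level_term]
    ring
  have hlower : Tendsto (fun N : ℕ ↦ (1 - 1 / ((N : ℝ) + 1)) * (π / 2) / 2) atTop (𝓝 (π / 4)) := by
    have := ((tendsto_const_nhds (x := (1 : ℝ))).sub
      tendsto_one_div_add_atTop_nhds_zero_nat).mul_const (π / 2) |>.div_const 2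
    convert this using 2
    ring
  simp only [hsum]
  refine tendsto_of_tendsto_of_tendsto_of_le_of_le hlower tendsto_const_nhds (fun N ↦ ?_) fun N ↦ ?_
  · linarith [le_sum_level_sinCos N]
  · linarith [sum_level_sinCos_le N]

theorem hasSum_term : HasSum term (π / 4) := by
  refine hasSum_of_monotone_of_tendsto_sum term_nonneg
    (fun m n h ↦ biUnion_subset_biUnion_of_subset_left _ (range_mono h)) (fun p ↦ ?_)
    tendsto_sum_biUnion_level_term
  obtain ⟨n, hn⟩ := exists_mem_level p
  exact ⟨n + 1, mem_biUnion.2 ⟨n, self_mem_range_succ n, hn⟩⟩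

end T

theorem stmt_8 :
    HasSum
      (fun p : T =>
        1 / (((p.val.1 : ℝ) ^ 2 + (p.val.2.1 : ℝ) ^ 2) *
          ((p.val.2.2.1 : ℝ) ^ 2 + (p.val.2.2.2 : ℝ) ^ 2) *
          (((p.val.1 : ℝ) + (p.val.2.2.1 : ℝ)) ^ 2 +
            ((p.val.2.1 : ℝ) + (p.val.2.2.2 : ℝ)) ^ 2)))
      (Real.pi / 4) := by
  convert T.hasSum_term using 2 with p
  simp only [T.term, T.x, T.y, Complex.normSq_apply, Complex.add_re, Complex.add_im]
  ring
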